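/- arXiv:2006.09361 — 3 statements merged into one kernel-verified Lean document; each statement's English description precedes it below -/
import Mathlib

section
/- Let f : ℝ^{d1} × ℝ^{d2} → ℝ be differentiable with ℓ-Lipschitz gradient and μ-strongly concave in y for every fixed x (0 < μ ≤ ℓ). Then for every x ∈ ℝ^{d1} the maximizer y*(x) = argmax_{y ∈ ℝ^{d2}} f(x,y) exists and is unique, and the map x ↦ y*(x) is κ-Lipschitz, where κ = ℓ/μ. -/
/-!
The strong-concavity inequality `g y ≤ g y' + ⟪G y', y - y'⟫ - μ/2 ‖y - y'‖²` alone makes `g`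
upper semicontinuous and quadratically decaying, so `g` attains its maximum on a ball. Testing it in
both directions between a maximizer `y` of `g` and a maximizer `y'` of another function `h`, where
both gradients vanish, gives `μ ‖y - y'‖ ≤ ‖∇g y' - ∇h y'‖`. For `g = h` this is uniqueness; for
`g = f x`, `h = f x'` the Lipschitz bound on the gradient in `x` turns it into
`μ ‖y*(x) - y*(x')‖ ≤ ℓ ‖x - x'‖`.
-/

open Set Filter Topology

section StronglyConcave

variable {E : Type*} [NormedAddCommGroup E] [InnerProductSpace ℝ E] {g : E → ℝ} {μ : ℝ}

theorem upperSemicontinuous_of_le_add_inner_sub {G : E → E}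
    (hg : ∀ y y', g y ≤ g y' + inner ℝ (G y') (y - y') - μ / 2 * ‖y - y'‖ ^ 2) (hμ : 0 ≤ μ) :
    UpperSemicontinuous g := by
  intro y' c hc
  have hbound : Tendsto (fun y => g y' + ‖G y'‖ * ‖y - y'‖) (𝓝 y') (𝓝 (g y')) := by
    have : Continuous fun y => g y' + ‖G y'‖ * ‖y - y'‖ := by fun_prop
    simpa using this.tendsto y'
  filter_upwards [hbound.eventually (eventually_lt_nhds hc)] with y hy
  have hconc := hg y y'
  have hinner := real_inner_le_norm (G y') (y - y')
  have hquad : 0 ≤ μ / 2 * ‖y - y'‖ ^ 2 := by positivity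
  linarith

theorem exists_isMaxOn_of_le_add_inner_sub [ProperSpace E] {G : E → E}
    (hg : ∀ y y', g y ≤ g y' + inner ℝ (G y') (y - y') - μ / 2 * ‖y - y'‖ ^ 2) (hμ : 0 < μ) :
    ∃ y, IsMaxOn g univ y := by
  have hR : 0 ≤ 2 * ‖G 0‖ / μ := by positivity
  obtain ⟨y, -, hy⟩ := ((upperSemicontinuous_of_le_add_inner_sub hg hμ.le).upperSemicontinuousOn
    _).exists_isMaxOn ⟨0, Metric.mem_closedBall_self hR⟩ (isCompact_closedBall 0 _)
  refine ⟨y, fun z _ => ?_⟩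
  by_cases hz : z ∈ Metric.closedBall (0 : E) (2 * ‖G 0‖ / μ)
  · exact hy hz
  -- beyond the radius `2 ‖G 0‖ / μ` the quadratic decay beats the linear term, so `g z ≤ g 0`
  have hzR : 2 * ‖G 0‖ < μ * ‖z‖ := by
    rw [Metric.mem_closedBall, dist_zero_right, not_le, div_lt_iff₀ hμ] at hz
    linarith
  have hquad : ‖G 0‖ * ‖z‖ ≤ μ / 2 * ‖z‖ ^ 2 := by
    nlinarith [mul_le_mul_of_nonneg_right hzR.le (norm_nonneg z)]
  calc g z ≤ g 0 + ‖G 0‖ * ‖z‖ - μ / 2 * ‖z‖ ^ 2 := by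
        have hz0 := hg z 0
        rw [sub_zero] at hz0
        linarith [real_inner_le_norm (G 0) z]
    _ ≤ g 0 := by linarith
    _ ≤ g y := hy (Metric.mem_closedBall_self hR)

variable [CompleteSpace E]

theorem IsLocalMax.gradient_eq_zero {y : E} (h : IsLocalMax g y) : gradient g y = 0 := by
  simp [gradient, h.fderiv_eq_zero]

theorem mul_sq_norm_sub_le_inner_gradient
    (hg : ∀ y y', g y ≤ g y' + inner ℝ (gradient g y') (y - y') - μ / 2 * ‖y - y'‖ ^ 2)
    {y : E} (hy : gradient g y = 0) (y' : E) :
    μ * ‖y - y'‖ ^ 2 ≤ inner ℝ (gradient g y') (y - y') := by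
  have h₁ := hg y y'
  have h₂ := hg y' y
  rw [hy, inner_zero_left, norm_sub_rev] at h₂
  linarith

theorem mul_norm_sub_le_norm_gradient_sub
    (hg : ∀ y y', g y ≤ g y' + inner ℝ (gradient g y') (y - y') - μ / 2 * ‖y - y'‖ ^ 2)
    {h : E → ℝ} {y y' : E} (hy : IsMaxOn g univ y) (hy' : IsMaxOn h univ y') :
    μ * ‖y - y'‖ ≤ ‖gradient g y' - gradient h y'‖ := by
  rcases (norm_nonneg (y - y')).eq_or_lt with hyy' | hyy'
  · rw [← hyy', mul_zero]
    exact norm_nonneg _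
  refine le_of_mul_le_mul_right ?_ hyy'
  calc μ * ‖y - y'‖ * ‖y - y'‖ = μ * ‖y - y'‖ ^ 2 := by ring
    _ ≤ inner ℝ (gradient g y' - gradient h y') (y - y') := by
        rw [(hy'.isLocalMax univ_mem).gradient_eq_zero, sub_zero]
        exact mul_sq_norm_sub_le_inner_gradient hg (hy.isLocalMax univ_mem).gradient_eq_zero y'
    _ ≤ ‖gradient g y' - gradient h y'‖ * ‖y - y'‖ := real_inner_le_norm _ _

theorem existsUnique_isMaxOn_of_le_add_inner_sub [ProperSpace E]
    (hg : ∀ y y', g y ≤ g y' + inner ℝ (gradient g y') (y - y') - μ / 2 * ‖y - y'‖ ^ 2)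
    (hμ : 0 < μ) : ∃! y, IsMaxOn g univ y := by
  obtain ⟨y, hy⟩ := exists_isMaxOn_of_le_add_inner_sub hg hμ
  refine ⟨y, hy, fun y' hy' => ?_⟩
  have := mul_norm_sub_le_norm_gradient_sub hg hy' hy
  rw [sub_self, norm_zero] at this
  exact sub_eq_zero.mp (norm_le_zero_iff.mp (nonpos_of_mul_nonpos_right this hμ))

end StronglyConcave

theorem zo_vrgda_stmt0_general (d1 d2 : ℕ)
    (f : EuclideanSpace ℝ (Fin d1) → EuclideanSpace ℝ (Fin d2) → ℝ)
    (ℓ μ : ℝ) (hμ : 0 < μ) (hμℓ : μ ≤ ℓ)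
    (hlip : ∀ x x' y y',
      ‖gradient (fun x'' => f x'' y) x - gradient (fun x'' => f x'' y') x'‖ ^ 2 +
          ‖gradient (f x) y - gradient (f x') y'‖ ^ 2 ≤
        ℓ ^ 2 * (‖x - x'‖ ^ 2 + ‖y - y'‖ ^ 2))
    (hconc : ∀ x y y',
      f x y ≤ f x y' + (inner ℝ (gradient (f x) y') (y - y') : ℝ) - μ / 2 * ‖y - y'‖ ^ 2) :
    (∀ x, ∃! y, IsMaxOn (f x) Set.univ y) ∧
      ∀ ystar : EuclideanSpace ℝ (Fin d1) → EuclideanSpace ℝ (Fin d2),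
        (∀ x, IsMaxOn (f x) Set.univ (ystar x)) →
        ∀ x x', ‖ystar x - ystar x'‖ ≤ ℓ / μ * ‖x - x'‖ := by
  refine ⟨fun x => existsUnique_isMaxOn_of_le_add_inner_sub (hconc x) hμ,
    fun ystar hystar x x' => ?_⟩
  have hgrad : ‖gradient (f x) (ystar x') - gradient (f x') (ystar x')‖ ≤ ℓ * ‖x - x'‖ := by
    have h := hlip x x' (ystar x') (ystar x')
    rw [sub_self, norm_zero] at h
    have hℓ : 0 ≤ ℓ := hμ.le.trans hμℓ
    refine (pow_le_pow_iff_left₀ (norm_nonneg _) (by positivity) two_ne_zero).mp ?_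
    nlinarith [sq_nonneg ‖gradient (fun x'' => f x'' (ystar x')) x -
      gradient (fun x'' => f x'' (ystar x')) x'‖]
  rw [div_mul_eq_mul_div, le_div_iff₀ hμ, mul_comm]
  exact (mul_norm_sub_le_norm_gradient_sub (hconc x) (hystar x) (hystar x')).trans hgrad

/-- If `f : ℝ^{d1} × ℝ^{d2} → ℝ` is differentiable with `ℓ`-Lipschitz gradient
and `μ`-strongly concave in `y` for every fixed `x` (`0 < μ ≤ ℓ`), then for every `x` the
maximizer `y*(x)` exists and is unique, and any selection `x ↦ y*(x)` is `κ`-Lipschitz with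
`κ = ℓ/μ`. -/
theorem zo_vrgda_stmt0 (d1 d2 : ℕ)
    (f : EuclideanSpace ℝ (Fin d1) → EuclideanSpace ℝ (Fin d2) → ℝ)
    (ℓ μ : ℝ) (hμ : 0 < μ) (hμℓ : μ ≤ ℓ)
    (hdiff : Differentiable ℝ
      (fun p : EuclideanSpace ℝ (Fin d1) × EuclideanSpace ℝ (Fin d2) => f p.1 p.2))
    (hlip : ∀ x x' y y',
      ‖gradient (fun x'' => f x'' y) x - gradient (fun x'' => f x'' y') x'‖ ^ 2 +
          ‖gradient (f x) y - gradient (f x') y'‖ ^ 2 ≤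
        ℓ ^ 2 * (‖x - x'‖ ^ 2 + ‖y - y'‖ ^ 2))
    (hconc : ∀ x y y',
      f x y ≤ f x y' + (inner ℝ (gradient (f x) y') (y - y') : ℝ) - μ / 2 * ‖y - y'‖ ^ 2) :
    (∀ x, ∃! y, IsMaxOn (f x) Set.univ y) ∧
      ∀ ystar : EuclideanSpace ℝ (Fin d1) → EuclideanSpace ℝ (Fin d2),
        (∀ x, IsMaxOn (f x) Set.univ (ystar x)) →
        ∀ x x', ‖ystar x - ystar x'‖ ≤ ℓ / μ * ‖x - x'‖ :=
  zo_vrgda_stmt0_general d1 d2 f ℓ μ hμ hμℓ hlip hconc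
end

section
/- Let f : ℝ^{d1} × ℝ^{d2} → ℝ be differentiable with ℓ-Lipschitz gradient and μ-strongly concave in y for every fixed x (0 < μ ≤ ℓ), and let y*(x) = argmax_{y} f(x,y). Then Φ(x) = max_{y ∈ ℝ^{d2}} f(x,y) is differentiable with ∇Φ(x) = ∇_x f(x, y*(x)) for every x, and ∇Φ is (κ+1)ℓ-Lipschitz, where κ = ℓ/μ. -/
/-! Strong concavity makes the maximizer `y*` `κ`-Lipschitz:
`μ ‖y*(x) - y*(x')‖ ≤ ‖∇_y f(x, y*(x'))‖ = ‖∇_y f(x, y*(x')) - ∇_y f(x', y*(x'))‖ ≤ ℓ ‖x - x'‖`.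
Since `y*` maximizes, `Φ(x') - Φ(x)` lies between `f(x', y*(x)) - f(x, y*(x))` and
`f(x', y*(x')) - f(x, y*(x'))`; expanding both to first order in `x` and using that `y*` is
Lipschitz shows `Φ(x') - Φ(x) - ⟪∇ₓ f(x, y*(x)), x' - x⟫ = O(‖x' - x‖²)`, which gives the
gradient formula. The Lipschitz bound on `∇Φ` is then the triangle inequality. -/

open InnerProductSpace Set Filter Topology

theorem le_mul_of_sq_add_sq_le {a b ℓ c : ℝ} (ha : 0 ≤ a) (hℓ : 0 ≤ ℓ) (hc : 0 ≤ c)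
    (h : a ^ 2 + b ^ 2 ≤ ℓ ^ 2 * c ^ 2) : a ≤ ℓ * c :=
  (sq_le_sq₀ ha (mul_nonneg hℓ hc)).mp (by nlinarith [sq_nonneg b])

section JointLipschitz

variable {E F : Type*} [NormedAddCommGroup E] [InnerProductSpace ℝ E] [CompleteSpace E]
  [NormedAddCommGroup F] [InnerProductSpace ℝ F] [CompleteSpace F]

/-- Lipschitz continuity of `(x, y) ↦ (∇ₓ f, ∇_y f)` for the Euclidean norm on `E × F`, written
out because the norm on `E × F` is the sup norm. -/
def JointlyLipschitzGradient (f : E → F → ℝ) (ℓ : ℝ) : Prop :=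
  ∀ x x' y y',
    ‖gradient (fun x'' => f x'' y) x - gradient (fun x'' => f x'' y') x'‖ ^ 2 +
        ‖gradient (f x) y - gradient (f x') y'‖ ^ 2 ≤
      ℓ ^ 2 * (‖x - x'‖ ^ 2 + ‖y - y'‖ ^ 2)

namespace JointlyLipschitzGradient

variable {f : E → F → ℝ} {ℓ : ℝ} (hf : JointlyLipschitzGradient f ℓ) (hℓ : 0 ≤ ℓ)
include hf hℓ

theorem norm_sub_gradient_fst_le_fst (x x' : E) (y : F) :
    ‖gradient (fun x'' => f x'' y) x - gradient (fun x'' => f x'' y) x'‖ ≤ ℓ * ‖x - x'‖ := by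
  have h := hf x x' y y
  rw [sub_self, norm_zero, zero_pow two_ne_zero, add_zero] at h
  exact le_mul_of_sq_add_sq_le (norm_nonneg _) hℓ (norm_nonneg _) h

theorem norm_sub_gradient_fst_le_snd (x : E) (y y' : F) :
    ‖gradient (fun x'' => f x'' y) x - gradient (fun x'' => f x'' y') x‖ ≤ ℓ * ‖y - y'‖ := by
  have h := hf x x y y'
  rw [sub_self, norm_zero, zero_pow two_ne_zero, zero_add] at h
  exact le_mul_of_sq_add_sq_le (norm_nonneg _) hℓ (norm_nonneg _) h

theorem norm_sub_gradient_snd_le_fst (x x' : E) (y : F) :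
    ‖gradient (f x) y - gradient (f x') y‖ ≤ ℓ * ‖x - x'‖ := by
  have h := hf x x' y y
  rw [sub_self, norm_zero, zero_pow two_ne_zero, add_zero] at h
  exact le_mul_of_sq_add_sq_le (norm_nonneg _) hℓ (norm_nonneg _) ((add_comm _ _).trans_le h)

end JointlyLipschitzGradient

end JointLipschitz

section Convexity

variable {F : Type*} [NormedAddCommGroup F] [InnerProductSpace ℝ F] [CompleteSpace F]

theorem abs_sub_sub_inner_gradient_le {g : F → ℝ} (hg : Differentiable ℝ g) {L : ℝ}
    (hL : 0 ≤ L) (hlip : ∀ z z', ‖gradient g z - gradient g z'‖ ≤ L * ‖z - z'‖) (a b : F) :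
    |g b - g a - ⟪gradient g a, b - a⟫_ℝ| ≤ L * ‖b - a‖ ^ 2 := by
  have key := (convex_closedBall a ‖b - a‖).norm_image_sub_le_of_norm_hasFDerivWithin_le'
    (f' := fun z => toDual ℝ F (gradient g z)) (φ := toDual ℝ F (gradient g a))
    (fun z _ => (hg z).hasGradientAt.hasFDerivAt.hasFDerivWithinAt)
    (fun z hz => by
      rw [← map_sub, LinearIsometryEquiv.norm_map]
      exact (hlip z a).trans (mul_le_mul_of_nonneg_left (mem_closedBall_iff_norm.mp hz) hL))
    (Metric.mem_closedBall_self (norm_nonneg _)) (mem_closedBall_iff_norm.mpr le_rfl)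
  rw [toDual_apply_apply, Real.norm_eq_abs] at key
  linarith

theorem gradient_eq_zero_of_isMaxOn {g : F → ℝ} {y₀ : F} (hmax : IsMaxOn g univ y₀) :
    gradient g y₀ = 0 := by
  simp [gradient, (hmax.isLocalMax univ_mem).fderiv_eq_zero]

/-- Adding the strong-concavity inequalities at `y₀` and at `y` (where `∇g y₀ = 0`) gives
`μ ‖y₀ - y‖² ≤ ⟪∇g y, y₀ - y⟫`, and Cauchy–Schwarz finishes. -/
theorem mul_norm_sub_le_norm_gradient_of_isMaxOn {g : F → ℝ} {μ : ℝ}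
    (hconc : ∀ y y', g y ≤ g y' + ⟪gradient g y', y - y'⟫_ℝ - μ / 2 * ‖y - y'‖ ^ 2)
    {y₀ : F} (hmax : IsMaxOn g univ y₀) (y : F) :
    μ * ‖y₀ - y‖ ≤ ‖gradient g y‖ := by
  have h₀ := hconc y y₀
  rw [gradient_eq_zero_of_isMaxOn hmax, inner_zero_left, norm_sub_rev] at h₀
  have hmono : μ * ‖y₀ - y‖ ^ 2 ≤ ‖gradient g y‖ * ‖y₀ - y‖ := by
    linarith [hconc y₀ y, real_inner_le_norm (gradient g y) (y₀ - y)]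
  rcases (norm_nonneg (y₀ - y)).eq_or_lt with hzero | hpos
  · rw [← hzero, mul_zero]
    exact norm_nonneg _
  · nlinarith

end Convexity

theorem norm_sub_maximizer_le {E F : Type*} [NormedAddCommGroup E]
    [NormedAddCommGroup F] [InnerProductSpace ℝ F] [CompleteSpace F]
    {f : E → F → ℝ} {ystar : E → F} {ℓ μ : ℝ} (hμ : 0 < μ)
    (hconc : ∀ x y y',
      f x y ≤ f x y' + ⟪gradient (f x) y', y - y'⟫_ℝ - μ / 2 * ‖y - y'‖ ^ 2)
    (hgrad : ∀ x x' y, ‖gradient (f x) y - gradient (f x') y‖ ≤ ℓ * ‖x - x'‖)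
    (hystar : ∀ x, IsMaxOn (f x) univ (ystar x)) (x x' : E) :
    ‖ystar x - ystar x'‖ ≤ ℓ / μ * ‖x - x'‖ := by
  rw [div_mul_eq_mul_div, le_div_iff₀' hμ]
  calc μ * ‖ystar x - ystar x'‖ ≤ ‖gradient (f x) (ystar x')‖ :=
        mul_norm_sub_le_norm_gradient_of_isMaxOn (hconc x) (hystar x) _
    _ = ‖gradient (f x) (ystar x') - gradient (f x') (ystar x')‖ := by
        rw [gradient_eq_zero_of_isMaxOn (hystar x'), sub_zero]
    _ ≤ ℓ * ‖x - x'‖ := hgrad x x' _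

theorem hasGradientAt_of_abs_sub_sub_inner_le {E : Type*} [NormedAddCommGroup E]
    [InnerProductSpace ℝ E] [CompleteSpace E] {φ : E → ℝ} {v x : E} {C : ℝ}
    (h : ∀ᶠ x' in 𝓝 x, |φ x' - φ x - ⟪v, x' - x⟫_ℝ| ≤ C * ‖x' - x‖ ^ 2) :
    HasGradientAt φ v x := by
  rw [hasGradientAt_iff_isLittleO]
  refine (Asymptotics.IsBigO.of_bound C ?_).trans_isLittleO
    (Asymptotics.isLittleO_pow_sub_sub x one_lt_two)
  filter_upwards [h] with x' hx'
  simpa [Real.norm_eq_abs] using hx'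

section Envelope

variable {E F : Type*} [NormedAddCommGroup E] [InnerProductSpace ℝ E] [NormedAddCommGroup F]
  {f : E → F → ℝ} {G : E → F → E} {ystar : E → F} {L ℓ K : ℝ}

theorem abs_sub_sub_inner_le_of_isMaxOn
    (hexp : ∀ y a b, |f b y - f a y - ⟪G a y, b - a⟫_ℝ| ≤ L * ‖b - a‖ ^ 2)
    (hG : ∀ x y y', ‖G x y - G x y'‖ ≤ ℓ * ‖y - y'‖) (hℓ : 0 ≤ ℓ)
    (hyl : ∀ x x', ‖ystar x - ystar x'‖ ≤ K * ‖x - x'‖)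
    (hystar : ∀ x, IsMaxOn (f x) univ (ystar x)) (x x' : E) :
    |f x' (ystar x') - f x (ystar x) - ⟪G x (ystar x), x' - x⟫_ℝ| ≤
      (L + ℓ * K) * ‖x' - x‖ ^ 2 := by
  have hinner : |⟪G x (ystar x'), x' - x⟫_ℝ - ⟪G x (ystar x), x' - x⟫_ℝ| ≤
      ℓ * K * ‖x' - x‖ ^ 2 := by
    rw [← inner_sub_left]
    calc |⟪G x (ystar x') - G x (ystar x), x' - x⟫_ℝ|
        ≤ ‖G x (ystar x') - G x (ystar x)‖ * ‖x' - x‖ := abs_real_inner_le_norm _ _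
      _ ≤ ℓ * (K * ‖x' - x‖) * ‖x' - x‖ := by
        gcongr
        exact (hG x _ _).trans (mul_le_mul_of_nonneg_left (hyl x' x) hℓ)
      _ = ℓ * K * ‖x' - x‖ ^ 2 := by ring
  have hnonneg : 0 ≤ ℓ * K * ‖x' - x‖ ^ 2 := (abs_nonneg _).trans hinner
  have hlow := hexp (ystar x) x x'
  have hup := hexp (ystar x') x x'
  have hmax₁ : f x' (ystar x) ≤ f x' (ystar x') := hystar x' (mem_univ _)
  have hmax₂ : f x (ystar x') ≤ f x (ystar x) := hystar x (mem_univ _)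
  rw [abs_le] at hlow hup hinner ⊢
  constructor <;> nlinarith

end Envelope

/-- Under the same assumptions as Statement 0, if `y*` is a selection of
maximizers, then `Φ(x) = f(x, y*(x))` is differentiable with `∇Φ(x) = ∇_x f(x, y*(x))`,
and `∇Φ` is `(κ+1)ℓ`-Lipschitz where `κ = ℓ/μ`. -/
theorem zo_vrgda_stmt1 (d1 d2 : ℕ)
    (f : EuclideanSpace ℝ (Fin d1) → EuclideanSpace ℝ (Fin d2) → ℝ)
    (ℓ μ : ℝ) (hμ : 0 < μ) (hμℓ : μ ≤ ℓ)
    (hdiff : Differentiable ℝ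
      (fun p : EuclideanSpace ℝ (Fin d1) × EuclideanSpace ℝ (Fin d2) => f p.1 p.2))
    (hlip : ∀ x x' y y',
      ‖gradient (fun x'' => f x'' y) x - gradient (fun x'' => f x'' y') x'‖ ^ 2 +
          ‖gradient (f x) y - gradient (f x') y'‖ ^ 2 ≤
        ℓ ^ 2 * (‖x - x'‖ ^ 2 + ‖y - y'‖ ^ 2))
    (hconc : ∀ x y y',
      f x y ≤ f x y' + (inner ℝ (gradient (f x) y') (y - y') : ℝ) - μ / 2 * ‖y - y'‖ ^ 2)
    (ystar : EuclideanSpace ℝ (Fin d1) → EuclideanSpace ℝ (Fin d2))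
    (hystar : ∀ x, IsMaxOn (f x) Set.univ (ystar x)) :
    Differentiable ℝ (fun x => f x (ystar x)) ∧
      (∀ x, gradient (fun x' => f x' (ystar x')) x = gradient (fun x' => f x' (ystar x)) x) ∧
      ∀ x x',
        ‖gradient (fun x'' => f x'' (ystar x'')) x -
            gradient (fun x'' => f x'' (ystar x'')) x'‖ ≤
          (ℓ / μ + 1) * ℓ * ‖x - x'‖ := by
  have hℓ : 0 ≤ ℓ := hμ.le.trans hμℓ
  have hJ : JointlyLipschitzGradient f ℓ := hlip
  have hyl := norm_sub_maximizer_le hμ hconc (hJ.norm_sub_gradient_snd_le_fst hℓ) hystar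
  have hexp : ∀ y a b, |f b y - f a y - ⟪gradient (fun x'' => f x'' y) a, b - a⟫_ℝ| ≤
      ℓ * ‖b - a‖ ^ 2 := fun y =>
    abs_sub_sub_inner_gradient_le (hdiff.comp (differentiable_id.prodMk (differentiable_const y)))
      hℓ (fun z z' => hJ.norm_sub_gradient_fst_le_fst hℓ z z' y)
  have hΦ : ∀ x, HasGradientAt (fun x' => f x' (ystar x'))
      (gradient (fun x'' => f x'' (ystar x)) x) x := fun x =>
    hasGradientAt_of_abs_sub_sub_inner_le <| .of_forall <|
      abs_sub_sub_inner_le_of_isMaxOn hexp (hJ.norm_sub_gradient_fst_le_snd hℓ) hℓ hyl hystar x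
  refine ⟨fun x => (hΦ x).differentiableAt, fun x => (hΦ x).gradient, fun x x' => ?_⟩
  rw [(hΦ x).gradient, (hΦ x').gradient]
  calc _ ≤ ‖gradient (fun x'' => f x'' (ystar x)) x - gradient (fun x'' => f x'' (ystar x)) x'‖ +
        ‖gradient (fun x'' => f x'' (ystar x)) x' - gradient (fun x'' => f x'' (ystar x')) x'‖ :=
        norm_sub_le_norm_sub_add_norm_sub _ _ _
    _ ≤ ℓ * ‖x - x'‖ + ℓ * (ℓ / μ * ‖x - x'‖) := by
        gcongr
        · exact hJ.norm_sub_gradient_fst_le_fst hℓ x x' _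
        · exact (hJ.norm_sub_gradient_fst_le_snd hℓ x' _ _).trans
            (mul_le_mul_of_nonneg_left (hyl x x') hℓ)
    _ = (ℓ / μ + 1) * ℓ * ‖x - x'‖ := by ring
end

section
/- Let h : ℝ^d → ℝ have ℓ-Lipschitz gradient, and let τ > 0. Then for all x ∈ ℝ^d, |h(x) − h_τ(x)| ≤ (τ²/2) ℓ d, where h_τ(x) = E_ν[h(x + τν)] is the Gaussian smoothed function. -/
/-!
Expand `h` to first order around `x`: since `∇h` is `ℓ`-Lipschitz,
`h (x + u) = h x + ⟪∇h x, u⟫ + r u` with `|r u| ≤ ℓ ‖u‖² / 2`. Averaging over `u = τ ν` with `ν`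
centred kills the linear term, so `|h x - h_τ x| ≤ ℓ τ² 𝔼‖ν‖² / 2`, and `𝔼‖ν‖² = d` for the standard
Gaussian.
-/

open MeasureTheory ProbabilityTheory

/-- The standard Gaussian measure `N(0, I_d)` on `ℝ^d`. -/
noncomputable def stdGaussian (d : ℕ) : Measure (EuclideanSpace ℝ (Fin d)) :=
  (Measure.pi fun _ : Fin d => gaussianReal 0 1).map
    (EuclideanSpace.equiv (Fin d) ℝ).symm

open scoped RealInnerProductSpace

namespace ProbabilityTheory

variable {E : Type*} [NormedAddCommGroup E] [InnerProductSpace ℝ E] [FiniteDimensional ℝ E]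
  [MeasurableSpace E] [BorelSpace E]

lemma integral_norm_sq_stdGaussian :
    ∫ x, ‖x‖ ^ 2 ∂(stdGaussian E) = Module.finrank ℝ E := by
  let b := stdOrthonormalBasis ℝ E
  have h_int (i) : Integrable (fun x => ⟪b i, x⟫ ^ 2) (stdGaussian E) :=
    (IsGaussian.memLp_two_id.const_inner (b i)).integrable_sq
  have h_coord (i) : ∫ x, ⟪b i, x⟫ ^ 2 ∂(stdGaussian E) = 1 := by
    have := variance_dual_stdGaussian (E := E) (innerSL ℝ (b i))
    rw [variance_of_integral_eq_zero (by fun_prop) (integral_strongDual_stdGaussian _)] at this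
    simpa [b.orthonormal.1 i] using this
  simp_rw [← b.sum_sq_inner_right]
  rw [integral_finsetSum _ fun i _ => h_int i]
  simp [h_coord]

end ProbabilityTheory

lemma stdGaussian_eq_stdGaussian_euclideanSpace (d : ℕ) :
    stdGaussian d = ProbabilityTheory.stdGaussian (EuclideanSpace ℝ (Fin d)) :=
  map_pi_eq_stdGaussian

lemma abs_sub_sub_inner_gradient_le_s4 {E : Type*} [NormedAddCommGroup E] [InnerProductSpace ℝ E]
    [CompleteSpace E] {h : E → ℝ} {ℓ : ℝ} (hdiff : Differentiable ℝ h)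
    (hlip : ∀ x x', ‖gradient h x - gradient h x'‖ ≤ ℓ * ‖x - x'‖) (x u : E) :
    |h (x + u) - h x - ⟪gradient h x, u⟫| ≤ ℓ / 2 * ‖u‖ ^ 2 := by
  set φ : ℝ → ℝ := fun t => h (x + t • u) - h x - t * ⟪gradient h x, u⟫
  have hφ (t : ℝ) : HasDerivAt φ ⟪gradient h (x + t • u) - gradient h x, u⟫ t := by
    have hline : HasDerivAt (fun s : ℝ => x + s • u) u t := by
      simpa using ((hasDerivAt_id t).smul_const u).const_add x
    have hh : HasDerivAt (fun s : ℝ => h (x + s • u)) ⟪gradient h (x + t • u), u⟫ t :=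
      (hdiff _).hasGradientAt.hasFDerivAt.comp_hasDerivAt t hline
    exact ((hh.sub_const (h x)).sub ((hasDerivAt_id t).mul_const ⟪gradient h x, u⟫)).congr_deriv
      (by simp [inner_sub_left])
  have hφ' (t : ℝ) (ht : t ∈ Set.Ico (0 : ℝ) 1) :
      ‖⟪gradient h (x + t • u) - gradient h x, u⟫‖ ≤ ℓ * ‖u‖ ^ 2 * t := by
    calc ‖⟪gradient h (x + t • u) - gradient h x, u⟫‖
        ≤ ‖gradient h (x + t • u) - gradient h x‖ * ‖u‖ := norm_inner_le_norm _ _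
      _ ≤ ℓ * ‖x + t • u - x‖ * ‖u‖ := mul_le_mul_of_nonneg_right (hlip _ _) (norm_nonneg u)
      _ = ℓ * ‖u‖ ^ 2 * t := by
        rw [add_sub_cancel_left, norm_smul, Real.norm_of_nonneg ht.1]; ring
  have hB (t : ℝ) : HasDerivAt (fun s : ℝ => ℓ / 2 * ‖u‖ ^ 2 * s ^ 2) (ℓ * ‖u‖ ^ 2 * t) t :=
    ((hasDerivAt_pow 2 t).const_mul (ℓ / 2 * ‖u‖ ^ 2)).congr_deriv (by norm_num; ring)
  have := image_norm_le_of_norm_deriv_right_le_deriv_boundary (f := φ) (a := 0) (b := 1)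
    (fun t _ => (hφ t).continuousAt.continuousWithinAt)
    (fun t _ => (hφ t).hasDerivWithinAt) (by simp [φ]) hB hφ' (Set.right_mem_Icc.2 zero_le_one)
  simpa [φ] using this

lemma abs_sub_integral_comp_add_smul_le {E : Type*} [NormedAddCommGroup E]
    [InnerProductSpace ℝ E] [CompleteSpace E] [MeasurableSpace E] [OpensMeasurableSpace E]
    {μ : Measure E} [IsProbabilityMeasure μ] {h : E → ℝ} {ℓ : ℝ} (hdiff : Differentiable ℝ h)
    (hlip : ∀ x x', ‖gradient h x - gradient h x'‖ ≤ ℓ * ‖x - x'‖)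
    (hμ : MemLp id 2 μ) (hmean : ∫ ν, ν ∂μ = 0) (x : E) (τ : ℝ) :
    |h x - ∫ ν, h (x + τ • ν) ∂μ| ≤ τ ^ 2 / 2 * ℓ * ∫ ν, ‖ν‖ ^ 2 ∂μ := by
  set g := gradient h x
  set r : E → ℝ := fun ν => h (x + τ • ν) - h x - ⟪g, τ • ν⟫
  have hr (ν : E) : ‖r ν‖ ≤ τ ^ 2 / 2 * ℓ * ‖ν‖ ^ 2 := by
    have := abs_sub_sub_inner_gradient_le_s4 hdiff hlip x (τ • ν)
    rw [norm_smul, mul_pow, Real.norm_eq_abs, sq_abs] at this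
    rw [Real.norm_eq_abs]; linarith
  have hsq : Integrable (fun ν => τ ^ 2 / 2 * ℓ * ‖ν‖ ^ 2) μ :=
    (hμ.integrable_norm_pow two_ne_zero).const_mul _
  have hlin : Integrable (fun ν => ⟪g, τ • ν⟫) μ :=
    ((hμ.integrable one_le_two).smul τ).const_inner g
  have hlin_zero : ∫ ν, ⟪g, τ • ν⟫ ∂μ = 0 := by
    rw [integral_inner (f := fun ν => τ • ν) ((hμ.integrable one_le_two).smul τ), integral_smul]
    simp [hmean]
  have hr_int : Integrable r μ :=
    hsq.mono' (by have := hdiff.continuous; fun_prop) (ae_of_all _ hr)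
  have h_split : ∫ ν, h (x + τ • ν) ∂μ = h x + ∫ ν, r ν ∂μ := by
    calc ∫ ν, h (x + τ • ν) ∂μ = ∫ ν, (h x + ⟪g, τ • ν⟫ + r ν) ∂μ := by simp [r]
      _ = h x + ∫ ν, r ν ∂μ := by
        have h_affine : Integrable (fun ν => h x + ⟪g, τ • ν⟫) μ := (integrable_const _).add hlin
        rw [integral_add h_affine hr_int, integral_add (integrable_const _) hlin, hlin_zero]
        simp
  calc |h x - ∫ ν, h (x + τ • ν) ∂μ| = ‖∫ ν, r ν ∂μ‖ := by
        rw [h_split, sub_add_cancel_left, abs_neg, Real.norm_eq_abs]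
    _ ≤ ∫ ν, τ ^ 2 / 2 * ℓ * ‖ν‖ ^ 2 ∂μ := norm_integral_le_of_norm_le hsq (ae_of_all _ hr)
    _ = τ ^ 2 / 2 * ℓ * ∫ ν, ‖ν‖ ^ 2 ∂μ := integral_const_mul _ _

theorem zo_vrgda_stmt4_general (d : ℕ) (h : EuclideanSpace ℝ (Fin d) → ℝ) (ℓ τ : ℝ)
    (hdiff : Differentiable ℝ h)
    (hlip : ∀ x x', ‖gradient h x - gradient h x'‖ ≤ ℓ * ‖x - x'‖) :
    ∀ x, |h x - ∫ ν, h (x + τ • ν) ∂(stdGaussian d)| ≤ τ ^ 2 / 2 * ℓ * d := by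
  intro x
  rw [stdGaussian_eq_stdGaussian_euclideanSpace]
  simpa [integral_norm_sq_stdGaussian] using abs_sub_integral_comp_add_smul_le hdiff hlip
    IsGaussian.memLp_two_id integral_id_stdGaussian x τ

/-- If `h : ℝ^d → ℝ` has `ℓ`-Lipschitz gradient and `τ > 0`, then for all `x`,
`|h(x) − h_τ(x)| ≤ (τ²/2) ℓ d`, where `h_τ(x) = E_ν[h(x + τν)]`. -/
theorem zo_vrgda_stmt4 (d : ℕ) (h : EuclideanSpace ℝ (Fin d) → ℝ) (ℓ τ : ℝ) (hτ : 0 < τ)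
    (hdiff : Differentiable ℝ h)
    (hlip : ∀ x x', ‖gradient h x - gradient h x'‖ ≤ ℓ * ‖x - x'‖) :
    ∀ x, |h x - ∫ ν, h (x + τ • ν) ∂(stdGaussian d)| ≤ τ ^ 2 / 2 * ℓ * d :=
  zo_vrgda_stmt4_general d h ℓ τ hdiff hlip
end
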